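/- Let T be a bounded linear operator on H admitting an A-adjoint T♯. Then w_A(T) ≥ √( (1/4)‖T♯∘T + T∘T♯‖_A + (1/4)| ‖Re_A(T) + Im_A(T)‖_A² − ‖Re_A(T) − Im_A(T)‖_A² | ). -/

import Mathlib

/-!
Write `P = Re_A(T)`, `Q = Im_A(T)`. Then `P ± Q = c • T + conj c • T♯` with `c = (1 ∓ i)/2`, so
`P ± Q` are `A`-selfadjoint and `⟨(P ± Q) x, x⟩_A = 2 Re (conj c ⟨T x, x⟩_A)`; polarization gives
`‖P ± Q‖_A ≤ w_A(P ± Q) ≤ √2 w_A(T)`. Moreover `(P + Q)² + (P - Q)² = T♯T + TT♯`, so with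
`a = ‖P + Q‖_A`, `b = ‖P - Q‖_A` the radicand is at most
`(a² + b² + |a² - b²|)/4 = max(a², b²)/2 ≤ w_A(T)²`.

The `A`-seminorm is `‖A^{1/2} x‖`. For the suprema defining `‖·‖_A` and `w_A` not to be the junk
value `sSup` takes on unbounded sets, operators admitting an `A`-adjoint must be bounded for the
`A`-seminorm.
-/

noncomputable section

open Complex ContinuousLinearMap

variable {H : Type*} [NormedAddCommGroup H] [InnerProductSpace ℂ H] [CompleteSpace H]

/-- The `A`-inner product `⟨x, y⟩_A = ⟨A x, y⟩`. -/
def innA (A : H →L[ℂ] H) (x y : H) : ℂ := @inner ℂ _ _ (A x) y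

/-- The `A`-seminorm `‖x‖_A = √⟨A x, x⟩`. -/
def vnormA (A : H →L[ℂ] H) (x : H) : ℝ := Real.sqrt (innA A x x).re

/-- The `A`-operator seminorm `‖T‖_A = sup {‖T x‖_A : ‖x‖_A = 1}`. -/
def opnormA (A T : H →L[ℂ] H) : ℝ :=
  sSup {r : ℝ | ∃ x : H, vnormA A x = 1 ∧ r = vnormA A (T x)}

/-- The `A`-numerical radius `w_A(T) = sup {|⟨T x, x⟩_A| : ‖x‖_A = 1}`. -/
def wA (A T : H →L[ℂ] H) : ℝ :=
  sSup {r : ℝ | ∃ x : H, vnormA A x = 1 ∧ r = ‖innA A (T x) x‖}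

/-- The `A`-numerical range `W_A(T) = {⟨T x, x⟩_A : ‖x‖_A = 1}`. -/
def WA (A T : H →L[ℂ] H) : Set ℂ :=
  {z : ℂ | ∃ x : H, vnormA A x = 1 ∧ z = innA A (T x) x}

/-- `Re_A(T) = (T + T♯)/2`, given an `A`-adjoint `Ts` of `T`. -/
def ReA (T Ts : H →L[ℂ] H) : H →L[ℂ] H := (2 : ℂ)⁻¹ • (T + Ts)

/-- `Im_A(T) = (T - T♯)/(2i)`, given an `A`-adjoint `Ts` of `T`. -/
def ImA (T Ts : H →L[ℂ] H) : H →L[ℂ] H := (2 * Complex.I)⁻¹ • (T - Ts)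

/-- `Ts` is an `A`-adjoint of `T`, i.e. `A ∘ Ts = T* ∘ A`. -/
def IsAAdjoint (A T Ts : H →L[ℂ] H) : Prop :=
  A.comp Ts = (ContinuousLinearMap.adjoint T).comp A

open scoped ComplexConjugate InnerProductSpace

theorem le_of_forall_pow_two_pow_le_mul {a b C : ℝ} (hb : 0 ≤ b)
    (h : ∀ n : ℕ, a ^ 2 ^ n ≤ C * b ^ 2 ^ n) : a ≤ b := by
  rcases hb.eq_or_lt with rfl | hb
  · simpa using h 0
  by_contra! hba
  obtain ⟨n, hn⟩ := pow_unbounded_of_one_lt C ((one_lt_div hb).2 hba)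
  have hle : (a / b) ^ n ≤ (a / b) ^ 2 ^ n :=
    pow_le_pow_right₀ ((one_lt_div hb).2 hba).le Nat.lt_two_pow_self.le
  have hC : (a / b) ^ 2 ^ n ≤ C := by
    rw [div_pow, div_le_iff₀ (by positivity)]
    exact h n
  linarith

section ASeminorm

variable {A S : H →L[ℂ] H}

theorem innA_eq_inner_sqrt (hA : A.IsPositive) (x y : H) :
    innA A x y = ⟪CFC.sqrt A x, CFC.sqrt A y⟫_ℂ := by
  have hR : IsSelfAdjoint (CFC.sqrt A) :=
    ((nonneg_iff_isPositive _).1 (CFC.sqrt_nonneg A)).isSelfAdjoint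
  conv_lhs => rw [innA, ← CFC.sqrt_mul_sqrt_self A ((nonneg_iff_isPositive A).2 hA)]
  exact hR.isSymmetric _ _

theorem vnormA_eq_norm_sqrt (hA : A.IsPositive) (x : H) : vnormA A x = ‖CFC.sqrt A x‖ := by
  rw [vnormA, innA_eq_inner_sqrt hA, ← RCLike.re_to_complex, ← norm_sq_eq_re_inner,
    Real.sqrt_sq (norm_nonneg _)]

theorem re_innA_self (hA : A.IsPositive) (x : H) : (innA A x x).re = vnormA A x ^ 2 := by
  rw [innA_eq_inner_sqrt hA, vnormA_eq_norm_sqrt hA, ← RCLike.re_to_complex,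
    ← norm_sq_eq_re_inner]

theorem norm_innA_le (hA : A.IsPositive) (x y : H) :
    ‖innA A x y‖ ≤ vnormA A x * vnormA A y := by
  simpa only [innA_eq_inner_sqrt hA, vnormA_eq_norm_sqrt hA] using norm_inner_le_norm _ _

theorem innA_conj_symm (hA : IsSelfAdjoint A) (x y : H) : conj (innA A y x) = innA A x y := by
  rw [innA, innA, inner_conj_symm, ← hA.adjoint_eq, adjoint_inner_left, hA.adjoint_eq]

omit [CompleteSpace H] in
theorem innA_smul_left (c : ℂ) (x y : H) : innA A (c • x) y = conj c * innA A x y := by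
  rw [innA, innA, map_smul, inner_smul_left]

omit [CompleteSpace H] in
theorem innA_smul_right (c : ℂ) (x y : H) : innA A x (c • y) = c * innA A x y :=
  inner_smul_right _ _ _

omit [CompleteSpace H] in
theorem vnormA_nonneg (x : H) : 0 ≤ vnormA A x := Real.sqrt_nonneg _

theorem vnormA_add_le (hA : A.IsPositive) (x y : H) :
    vnormA A (x + y) ≤ vnormA A x + vnormA A y := by
  simpa only [vnormA_eq_norm_sqrt hA, map_add] using norm_add_le _ _

theorem vnormA_smul (hA : A.IsPositive) (c : ℂ) (x : H) :
    vnormA A (c • x) = ‖c‖ * vnormA A x := by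
  rw [vnormA_eq_norm_sqrt hA, vnormA_eq_norm_sqrt hA, map_smul, norm_smul]

theorem vnormA_le (hA : A.IsPositive) (x : H) : vnormA A x ≤ ‖CFC.sqrt A‖ * ‖x‖ := by
  rw [vnormA_eq_norm_sqrt hA]
  exact le_opNorm _ _

theorem vnormA_add_sq_add_vnormA_sub_sq (hA : A.IsPositive) (x y : H) :
    vnormA A (x + y) ^ 2 + vnormA A (x - y) ^ 2 = 2 * (vnormA A x ^ 2 + vnormA A y ^ 2) := by
  simp only [vnormA_eq_norm_sqrt hA, map_add, map_sub]
  linear_combination parallelogram_law_with_norm ℂ (CFC.sqrt A x) (CFC.sqrt A y)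

theorem exists_vnormA_eq_one_smul (hA : A.IsPositive) {x : H} (hx : vnormA A x ≠ 0) :
    ∃ u, vnormA A u = 1 ∧ x = (vnormA A x : ℂ) • u := by
  refine ⟨(vnormA A x : ℂ)⁻¹ • x, ?_, ?_⟩
  · rw [vnormA_smul hA, norm_inv, norm_real, Real.norm_of_nonneg (vnormA_nonneg x),
      inv_mul_cancel₀ hx]
  · rw [smul_inv_smul₀ (ofReal_ne_zero.2 hx)]

theorem vnormA_apply_le_of_forall_vnormA_eq_one (hA : A.IsPositive) {C : ℝ}
    (h0 : ∀ x, vnormA A x = 0 → vnormA A (S x) = 0)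
    (h1 : ∀ u, vnormA A u = 1 → vnormA A (S u) ≤ C) (x : H) :
    vnormA A (S x) ≤ C * vnormA A x := by
  by_cases hx : vnormA A x = 0
  · rw [h0 x hx, hx, mul_zero]
  obtain ⟨u, hu, hxu⟩ := exists_vnormA_eq_one_smul hA hx
  conv_lhs => rw [hxu]
  rw [map_smul, vnormA_smul hA, norm_real, Real.norm_of_nonneg (vnormA_nonneg x), mul_comm C]
  exact mul_le_mul_of_nonneg_left (h1 u hu) (vnormA_nonneg x)

end ASeminorm
section AAdjoint

variable {A S Ss T Ts : H →L[ℂ] H}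

theorem IsAAdjoint.innA_apply (h : IsAAdjoint A T Ts) (x y : H) :
    innA A (Ts x) y = innA A x (T y) := by
  rw [innA, innA, ← comp_apply, h, comp_apply, adjoint_inner_left]

theorem IsAAdjoint.symm (hA : IsSelfAdjoint A) (h : IsAAdjoint A T Ts) : IsAAdjoint A Ts T := by
  have := congrArg adjoint h
  rwa [adjoint_comp, adjoint_comp, adjoint_adjoint, hA.adjoint_eq, eq_comm] at this

theorem IsAAdjoint.comp (hS : IsAAdjoint A S Ss) (hT : IsAAdjoint A T Ts) :
    IsAAdjoint A (S.comp T) (Ts.comp Ss) := by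
  rw [IsAAdjoint, ← comp_assoc, hT, comp_assoc, hS, ← comp_assoc, adjoint_comp]

theorem IsAAdjoint.add (hS : IsAAdjoint A S Ss) (hT : IsAAdjoint A T Ts) :
    IsAAdjoint A (S + T) (Ss + Ts) := by
  rw [IsAAdjoint, comp_add, hS, hT, map_add, add_comp]

theorem IsAAdjoint.smul (h : IsAAdjoint A T Ts) (c : ℂ) : IsAAdjoint A (c • T) (conj c • Ts) := by
  rw [IsAAdjoint, comp_smul, h, map_smulₛₗ, smul_comp]

theorem IsAAdjoint.pow (h : IsAAdjoint A S S) (n : ℕ) : IsAAdjoint A (S ^ n) (S ^ n) := by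
  induction n with
  | zero => rw [pow_zero, IsAAdjoint, one_def, adjoint_id, comp_id, id_comp]
  | succ n ih =>
    have := ih.comp h
    rwa [← mul_def, ← mul_def, ← pow_succ, ← pow_succ'] at this

theorem IsAAdjoint.smul_add_conj_smul_self (hA : IsSelfAdjoint A) (h : IsAAdjoint A T Ts) (c : ℂ) :
    IsAAdjoint A (c • T + conj c • Ts) (c • T + conj c • Ts) := by
  have := (h.smul c).add ((h.symm hA).smul (conj c))
  rwa [conj_conj, add_comm (conj c • Ts)] at this

end AAdjoint

section ABounded

variable {A S S₁ S₂ T Ts : H →L[ℂ] H}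

theorem IsAAdjoint.vnormA_apply_sq_le (hA : A.IsPositive) (h : IsAAdjoint A S S) (x : H) :
    vnormA A (S x) ^ 2 ≤ vnormA A (S (S x)) * vnormA A x := by
  rw [← re_innA_self hA, h.innA_apply, mul_comm]
  exact (re_le_norm _).trans (norm_innA_le hA _ _)

theorem IsAAdjoint.vnormA_apply_pow_two_pow_le (hA : A.IsPositive) (h : IsAAdjoint A S S)
    {x : H} (hx : vnormA A x = 1) (n : ℕ) :
    vnormA A (S x) ^ 2 ^ n ≤ vnormA A ((S ^ 2 ^ n) x) := by
  induction n with
  | zero => simp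
  | succ n ih =>
    calc vnormA A (S x) ^ 2 ^ (n + 1) = (vnormA A (S x) ^ 2 ^ n) ^ 2 := by ring
      _ ≤ vnormA A ((S ^ 2 ^ n) x) ^ 2 := pow_le_pow_left₀ (pow_nonneg (vnormA_nonneg _) _) ih 2
      _ ≤ vnormA A ((S ^ 2 ^ n) ((S ^ 2 ^ n) x)) * vnormA A x :=
        (h.pow _).vnormA_apply_sq_le hA x
      _ = vnormA A ((S ^ 2 ^ (n + 1)) x) := by rw [hx, mul_one, pow_succ, pow_mul, sq]; rfl

/-- The spectral-radius trick: `‖S x‖_A ^ 2 ^ n ≤ ‖S ^ 2 ^ n x‖_A` for `‖x‖_A = 1`, and the right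
side grows at most like `‖S‖ ^ 2 ^ n`. -/
theorem IsAAdjoint.vnormA_apply_le (hA : A.IsPositive) (h : IsAAdjoint A S S) (x : H) :
    vnormA A (S x) ≤ ‖S‖ * vnormA A x := by
  refine vnormA_apply_le_of_forall_vnormA_eq_one hA (fun y hy => ?_) (fun u hu => ?_) x
  · have := h.vnormA_apply_sq_le hA y
    rw [hy, mul_zero] at this
    exact (pow_eq_zero_iff two_ne_zero).1 (le_antisymm this (sq_nonneg _))
  refine le_of_forall_pow_two_pow_le_mul (norm_nonneg _) (C := ‖CFC.sqrt A‖ * ‖u‖) fun n => ?_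
  calc vnormA A (S u) ^ 2 ^ n ≤ vnormA A ((S ^ 2 ^ n) u) := h.vnormA_apply_pow_two_pow_le hA hu n
    _ ≤ ‖CFC.sqrt A‖ * ‖(S ^ 2 ^ n) u‖ := vnormA_le hA _
    _ ≤ ‖CFC.sqrt A‖ * (‖S‖ ^ 2 ^ n * ‖u‖) := by
      gcongr
      exact (le_opNorm _ _).trans (by gcongr; exact norm_pow_le' S (by positivity))
    _ = _ := by ring

def IsABounded (A S : H →L[ℂ] H) : Prop :=
  ∃ C, ∀ x, vnormA A (S x) ≤ C * vnormA A x

theorem IsAAdjoint.isABounded (hA : A.IsPositive) (h : IsAAdjoint A T Ts) : IsABounded A T := by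
  have h' := h.symm hA.isSelfAdjoint
  refine ⟨√‖Ts.comp T‖, fun x => ?_⟩
  rw [← pow_le_pow_iff_left₀ (vnormA_nonneg _) (mul_nonneg (Real.sqrt_nonneg _) (vnormA_nonneg x))
    two_ne_zero, mul_pow, Real.sq_sqrt (norm_nonneg _)]
  calc vnormA A (T x) ^ 2 = (innA A x (Ts (T x))).re := by rw [← re_innA_self hA, h'.innA_apply]
    _ ≤ vnormA A x * vnormA A (Ts (T x)) := (re_le_norm _).trans (norm_innA_le hA _ _)
    _ ≤ vnormA A x * (‖Ts.comp T‖ * vnormA A x) :=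
      mul_le_mul_of_nonneg_left ((h'.comp h).vnormA_apply_le hA x) (vnormA_nonneg x)
    _ = ‖Ts.comp T‖ * vnormA A x ^ 2 := by ring

omit [CompleteSpace H] in
theorem opnormA_nonneg : 0 ≤ opnormA A S :=
  Real.sSup_nonneg (by rintro _ ⟨x, -, rfl⟩; exact vnormA_nonneg _)

omit [CompleteSpace H] in
theorem wA_nonneg : 0 ≤ wA A T :=
  Real.sSup_nonneg (by rintro _ ⟨x, -, rfl⟩; exact norm_nonneg _)

theorem IsABounded.vnormA_apply_le_opnormA (hA : A.IsPositive) (hS : IsABounded A S) (x : H) :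
    vnormA A (S x) ≤ opnormA A S * vnormA A x := by
  obtain ⟨C, hC⟩ := hS
  refine vnormA_apply_le_of_forall_vnormA_eq_one hA (fun y hy => ?_) (fun u hu => ?_) x
  · exact le_antisymm (by simpa [hy] using hC y) (vnormA_nonneg _)
  · exact le_csSup ⟨C, by rintro _ ⟨y, hy, rfl⟩; simpa [hy] using hC y⟩ ⟨u, hu, rfl⟩

theorem IsABounded.norm_innA_le_wA (hA : A.IsPositive) (hT : IsABounded A T) (x : H) :
    ‖innA A (T x) x‖ ≤ wA A T * vnormA A x ^ 2 := by
  obtain ⟨C, hC⟩ := hT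
  have hbdd (y : H) : ‖innA A (T y) y‖ ≤ C * vnormA A y ^ 2 := by
    rw [sq, ← mul_assoc]
    exact (norm_innA_le hA _ _).trans (mul_le_mul_of_nonneg_right (hC y) (vnormA_nonneg y))
  by_cases hx : vnormA A x = 0
  · simpa [hx] using hbdd x
  obtain ⟨u, hu, hxu⟩ := exists_vnormA_eq_one_smul hA hx
  have hle : ‖innA A (T u) u‖ ≤ wA A T :=
    le_csSup ⟨C, by rintro _ ⟨y, hy, rfl⟩; simpa [hy] using hbdd y⟩ ⟨u, hu, rfl⟩
  conv_lhs => rw [hxu, map_smul, innA_smul_left, innA_smul_right, norm_mul, norm_mul, norm_conj,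
    norm_real, Real.norm_of_nonneg (vnormA_nonneg x)]
  nlinarith [vnormA_nonneg (A := A) x]

theorem opnormA_comp_self_add_comp_self_le (hA : A.IsPositive) (h₁ : IsABounded A S₁)
    (h₂ : IsABounded A S₂) :
    opnormA A (S₁.comp S₁ + S₂.comp S₂) ≤ opnormA A S₁ ^ 2 + opnormA A S₂ ^ 2 := by
  refine Real.sSup_le ?_ (add_nonneg (sq_nonneg _) (sq_nonneg _))
  rintro _ ⟨x, hx, rfl⟩
  have hsq {S : H →L[ℂ] H} (hS : IsABounded A S) : vnormA A (S (S x)) ≤ opnormA A S ^ 2 :=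
    calc vnormA A (S (S x)) ≤ opnormA A S * vnormA A (S x) := hS.vnormA_apply_le_opnormA hA _
      _ ≤ opnormA A S * (opnormA A S * vnormA A x) :=
        mul_le_mul_of_nonneg_left (hS.vnormA_apply_le_opnormA hA _) opnormA_nonneg
      _ = opnormA A S ^ 2 := by rw [hx]; ring
  exact (vnormA_add_le hA _ _).trans (add_le_add (hsq h₁) (hsq h₂))

theorem IsAAdjoint.re_innA_add_sub_re_innA_sub (hA : IsSelfAdjoint A) (h : IsAAdjoint A S S)
    (x y : H) :
    (innA A (S (x + y)) (x + y)).re - (innA A (S (x - y)) (x - y)).re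
      = 4 * (innA A (S x) y).re := by
  have hyx : innA A (S y) x = conj (innA A (S x) y) := by
    rw [h.innA_apply, innA_conj_symm hA]
  simp only [innA, map_add, map_sub, inner_add_left, inner_add_right, inner_sub_left,
    inner_sub_right] at hyx ⊢
  rw [hyx]
  simp only [add_re, sub_re, conj_re]
  ring

/-- Polarization at `y = S x / ‖S x‖_A`. -/
theorem IsAAdjoint.opnormA_le_wA (hA : A.IsPositive) (h : IsAAdjoint A S S) :
    opnormA A S ≤ wA A S := by
  refine Real.sSup_le ?_ wA_nonneg
  rintro _ ⟨x, hx, rfl⟩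
  obtain hr | hr := (vnormA_nonneg (A := A) (S x)).eq_or_lt
  · rw [← hr]
    exact wA_nonneg
  set r := vnormA A (S x) with hr_def
  set y : H := ((r⁻¹ : ℝ) : ℂ) • S x
  have hy : vnormA A y = 1 := by
    rw [vnormA_smul hA, norm_real, Real.norm_of_nonneg (inv_nonneg.2 hr.le),
      inv_mul_cancel₀ hr.ne']
  have hxy : (innA A (S x) y).re = r := by
    rw [innA_smul_right, re_ofReal_mul, re_innA_self hA, ← hr_def]
    field_simp
  have hw := (h.isABounded hA).norm_innA_le_wA hA
  have hplus := (re_le_norm _).trans (hw (x + y))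
  have hminus := (neg_le_abs _).trans ((abs_re_le_norm _).trans (hw (x - y)))
  have hpar := vnormA_add_sq_add_vnormA_sub_sq hA x y
  rw [hx, hy] at hpar
  have hsum : wA A S * vnormA A (x + y) ^ 2 + wA A S * vnormA A (x - y) ^ 2 = 4 * wA A S := by
    rw [← mul_add, hpar]
    ring
  linarith [h.re_innA_add_sub_re_innA_sub hA.isSelfAdjoint x y]

theorem IsAAdjoint.wA_smul_add_conj_smul_le (hA : A.IsPositive) (h : IsAAdjoint A T Ts) (c : ℂ) :
    wA A (c • T + conj c • Ts) ≤ 2 * ‖c‖ * wA A T := by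
  refine Real.sSup_le ?_ (mul_nonneg (by positivity) wA_nonneg)
  rintro _ ⟨x, hx, rfl⟩
  have hz := (h.isABounded hA).norm_innA_le_wA hA x
  rw [hx, one_pow, mul_one] at hz
  have hval : innA A ((c • T + conj c • Ts) x) x
      = conj c * innA A (T x) x + c * conj (innA A (T x) x) := by
    rw [add_apply, smul_apply, smul_apply, innA, map_add, inner_add_left, ← innA, ← innA,
      innA_smul_left, innA_smul_left, conj_conj, h.innA_apply, innA_conj_symm hA.isSelfAdjoint]
  calc ‖innA A ((c • T + conj c • Ts) x) x‖
      ≤ ‖c‖ * ‖innA A (T x) x‖ + ‖c‖ * ‖innA A (T x) x‖ := by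
        rw [hval]
        refine (norm_add_le _ _).trans_eq ?_
        rw [norm_mul, norm_mul, norm_conj, norm_conj]
    _ ≤ 2 * ‖c‖ * wA A T := by nlinarith [norm_nonneg c]

theorem IsAAdjoint.opnormA_smul_add_conj_smul_le (hA : A.IsPositive) (h : IsAAdjoint A T Ts)
    (c : ℂ) : opnormA A (c • T + conj c • Ts) ≤ 2 * ‖c‖ * wA A T :=
  ((h.smul_add_conj_smul_self hA.isSelfAdjoint c).opnormA_le_wA hA).trans
    (h.wA_smul_add_conj_smul_le hA c)

end ABounded

section CartesianDecomposition

omit [CompleteSpace H]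

theorem reA_add_imA (T Ts : H →L[ℂ] H) :
    ReA T Ts + ImA T Ts = ((1 - I) / 2) • T + conj ((1 - I) / 2) • Ts := by
  ext x
  simp only [ReA, ImA, add_apply, smul_apply, sub_apply, map_div₀, map_sub, map_one, conj_I,
    map_ofNat]
  match_scalars <;> field_simp <;> ring_nf <;> simp [I_sq] <;> ring

theorem reA_sub_imA (T Ts : H →L[ℂ] H) :
    ReA T Ts - ImA T Ts = ((1 + I) / 2) • T + conj ((1 + I) / 2) • Ts := by
  ext x
  simp only [ReA, ImA, add_apply, smul_apply, sub_apply, map_div₀, map_add, map_one, conj_I,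
    map_ofNat]
  match_scalars <;> field_simp <;> ring_nf <;> simp [I_sq] <;> ring

theorem comp_add_comp_eq_reA_add_imA_sq_add_reA_sub_imA_sq (T Ts : H →L[ℂ] H) :
    Ts.comp T + T.comp Ts = (ReA T Ts + ImA T Ts).comp (ReA T Ts + ImA T Ts)
      + (ReA T Ts - ImA T Ts).comp (ReA T Ts - ImA T Ts) := by
  ext x
  simp only [ReA, ImA, add_apply, smul_apply, sub_apply, comp_apply, map_add, map_sub, map_smul]
  match_scalars <;> field_simp <;> ring_nf <;> simp [I_sq] <;> ring

end CartesianDecomposition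

theorem stmt12 (A T Ts : H →L[ℂ] H) (hA : A.IsPositive) (hTs : IsAAdjoint A T Ts) :
    wA A T ≥ Real.sqrt ((1 / 4) * opnormA A (Ts.comp T + T.comp Ts) +
      (1 / 4) * |opnormA A (ReA T Ts + ImA T Ts) ^ 2 - opnormA A (ReA T Ts - ImA T Ts) ^ 2|) := by
  have hsq (c : ℂ) (hc : ‖c‖ ^ 2 = 1 / 2) :
      opnormA A (c • T + conj c • Ts) ^ 2 ≤ 2 * wA A T ^ 2 :=
    calc _ ≤ (2 * ‖c‖ * wA A T) ^ 2 :=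
          pow_le_pow_left₀ opnormA_nonneg (hTs.opnormA_smul_add_conj_smul_le hA c) 2
      _ = 2 * wA A T ^ 2 := by rw [mul_pow, mul_pow, hc]; ring
  have hbdd (c : ℂ) : IsABounded A (c • T + conj c • Ts) :=
    (hTs.smul_add_conj_smul_self hA.isSelfAdjoint c).isABounded hA
  have hP := hsq ((1 - I) / 2) (by rw [Complex.sq_norm, normSq_apply]; norm_num)
  have hM := hsq ((1 + I) / 2) (by rw [Complex.sq_norm, normSq_apply]; norm_num)
  have hsum := opnormA_comp_self_add_comp_self_le hA (hbdd ((1 - I) / 2)) (hbdd ((1 + I) / 2))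
  rw [← reA_add_imA] at hP hsum
  rw [← reA_sub_imA] at hM hsum
  rw [← comp_add_comp_eq_reA_add_imA_sq_add_reA_sub_imA_sq] at hsum
  set a := opnormA A (ReA T Ts + ImA T Ts)
  set b := opnormA A (ReA T Ts - ImA T Ts)
  have habs : |a ^ 2 - b ^ 2| ≤ 4 * wA A T ^ 2 - a ^ 2 - b ^ 2 :=
    abs_sub_le_iff.2 ⟨by linarith, by linarith⟩
  rw [ge_iff_le, Real.sqrt_le_left wA_nonneg]
  linarith
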